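/- arXiv:1907.08093 — 2 statements merged into one kernel-verified Lean document; each statement's English description precedes it below -/
import Mathlib

section
/- Let G be a connected graph, X a set of vertices, and a, b two distinct vertices in X. If every vertex v in the open neighborhood N(X) = N[X] \ X satisfies dist(v,a) = dist(v,b), then every vertex v outside X satisfies dist(v,a) = dist(v,b). -/
/-!
A shortest path from `v ∉ X` to `a ∈ X` leaves the complement of `X` through a vertex `w` of
`N(X)` lying on it, so `dist v a = dist v w + dist w a = dist v w + dist w b ≥ dist v b`.
Exchanging `a` and `b` gives the reverse inequality.
-/

namespace SimpleGraph

variable {V : Type*} {G : SimpleGraph V}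

lemma Walk.dist_add_dist_le_length {u v w : V} (p : G.Walk u v) (hw : w ∈ p.support) :
    G.dist u w + G.dist w v ≤ p.length := by
  classical
  rw [← p.take_spec hw, Walk.length_append]
  exact add_le_add (dist_le _) (dist_le _)

lemma Reachable.exists_adj_mem_dist_add_dist_le {X : Set V} {u v : V} (huv : G.Reachable u v)
    (hu : u ∉ X) (hv : v ∈ X) :
    ∃ w ∉ X, (∃ x ∈ X, G.Adj w x) ∧ G.dist u w + G.dist w v ≤ G.dist u v := by
  obtain ⟨p, hp⟩ := huv.exists_walk_length_eq_dist
  obtain ⟨d, hd, hd_fst, hd_snd⟩ := p.exists_boundary_dart Xᶜ hu (by simpa using hv)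
  refine ⟨d.fst, hd_fst, ⟨d.snd, not_not.mp hd_snd, d.adj⟩, ?_⟩
  exact hp ▸ p.dist_add_dist_le_length (p.dart_fst_mem_support_of_mem_darts hd)

lemma Connected.dist_le_dist_of_forall_adj_mem {X : Set V} {a b : V} (hG : G.Connected)
    (ha : a ∈ X) (h : ∀ v, v ∉ X → (∃ x ∈ X, G.Adj v x) → G.dist v a = G.dist v b)
    {v : V} (hv : v ∉ X) : G.dist v b ≤ G.dist v a := by
  obtain ⟨w, hw, hwX, hle⟩ := (hG.preconnected v a).exists_adj_mem_dist_add_dist_le hv ha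
  calc G.dist v b ≤ G.dist v w + G.dist w b := hG.dist_triangle
    _ = G.dist v w + G.dist w a := by rw [h w hw hwX]
    _ ≤ G.dist v a := hle

end SimpleGraph

theorem surrounded_not_resolved_general {V : Type*} (G : SimpleGraph V) (hG : G.Connected)
    (X : Set V) (a b : V) (ha : a ∈ X) (hb : b ∈ X)
    (h : ∀ v, v ∉ X → (∃ x ∈ X, G.Adj v x) → G.dist v a = G.dist v b) :
    ∀ v, v ∉ X → G.dist v a = G.dist v b := fun v hv =>
  le_antisymm (hG.dist_le_dist_of_forall_adj_mem hb (fun u hu huX => (h u hu huX).symm) hv)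
    (hG.dist_le_dist_of_forall_adj_mem ha h hv)

theorem surrounded_not_resolved {V : Type*} (G : SimpleGraph V) (hG : G.Connected)
    (X : Set V) (a b : V) (ha : a ∈ X) (hb : b ∈ X) (hab : a ≠ b)
    (h : ∀ v, v ∉ X → (∃ x ∈ X, G.Adj v x) → G.dist v a = G.dist v b) :
    ∀ v, v ∉ X → G.dist v a = G.dist v b :=
  surrounded_not_resolved_general G hG X a b ha hb h
end

section
/- Let G be a connected graph and let {a,b} be a pair of vertices. If X ⊆ V(G) contains a and b, and no vertex of N(X) resolves {a,b}, then any resolving set of G must contain at least one vertex of X. -/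
/-!
Every vertex `w` outside `X` is equidistant from `a` and `b`: a shortest walk from `w` to `a` leaves
the complement of `X` through a vertex `u ∈ N(X)`, so
`d(w, b) ≤ d(w, u) + d(u, b) = d(w, u) + d(u, a) = d(w, a)`, and symmetrically.
Hence only vertices of `X` can resolve `{a, b}`.
-/

namespace SimpleGraph

variable {V : Type*} {G : SimpleGraph V}

/-- The open neighbourhood `N(X)`. -/
def openNhd (G : SimpleGraph V) (X : Set V) : Set V :=
  {u | u ∉ X ∧ ∃ x ∈ X, G.Adj u x}

theorem Walk.exists_mem_openNhd_dist_add_dist_le {X : Set V} {w c : V} (p : G.Walk w c)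
    (hw : w ∉ X) (hc : c ∈ X) :
    ∃ u ∈ G.openNhd X, G.dist w u + G.dist u c ≤ p.length := by
  classical
  obtain ⟨d, hd, hfst, hsnd⟩ := p.exists_boundary_dart Xᶜ hw (by simpa using hc)
  have hu : d.fst ∈ p.support := p.dart_fst_mem_support_of_mem_darts hd
  refine ⟨d.fst, ⟨hfst, d.snd, not_not.mp hsnd, d.adj⟩, ?_⟩
  calc G.dist w d.fst + G.dist d.fst c
      ≤ (p.takeUntil _ hu).length + (p.dropUntil _ hu).length :=
        add_le_add (dist_le _) (dist_le _)
    _ = p.length := by rw [← Walk.length_append, p.take_spec hu]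

theorem Connected.dist_le_dist_of_forall_openNhd (hG : G.Connected) {X : Set V} {c d w : V}
    (hc : c ∈ X) (hw : w ∉ X) (hcd : ∀ u ∈ G.openNhd X, G.dist u d ≤ G.dist u c) :
    G.dist w d ≤ G.dist w c := by
  obtain ⟨p, hp⟩ := hG.exists_walk_length_eq_dist w c
  obtain ⟨u, hu, hle⟩ := p.exists_mem_openNhd_dist_add_dist_le hw hc
  calc G.dist w d ≤ G.dist w u + G.dist u d := hG.dist_triangle
    _ ≤ G.dist w u + G.dist u c := by gcongr; exact hcd u hu
    _ ≤ G.dist w c := hp ▸ hle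

theorem Connected.dist_eq_dist_of_forall_openNhd (hG : G.Connected) {X : Set V} {a b w : V}
    (ha : a ∈ X) (hb : b ∈ X) (hw : w ∉ X)
    (hab : ∀ u ∈ G.openNhd X, G.dist u a = G.dist u b) :
    G.dist w a = G.dist w b :=
  le_antisymm (hG.dist_le_dist_of_forall_openNhd hb hw fun u hu => (hab u hu).le)
    (hG.dist_le_dist_of_forall_openNhd ha hw fun u hu => (hab u hu).ge)

end SimpleGraph

theorem resolving_set_meets_surrounded {V : Type*} (G : SimpleGraph V) (hG : G.Connected)
    (X : Set V) (a b : V) (ha : a ∈ X) (hb : b ∈ X) (hab : a ≠ b)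
    (h : ∀ w, w ∉ X → (∃ x ∈ X, G.Adj w x) → G.dist w a = G.dist w b)
    (S : Set V) (hS : ∀ x y : V, x ≠ y → ∃ s ∈ S, G.dist s x ≠ G.dist s y) :
    ∃ x ∈ S, x ∈ X := by
  obtain ⟨s, hsS, hs⟩ := hS a b hab
  refine ⟨s, hsS, ?_⟩
  by_contra hsX
  exact hs (hG.dist_eq_dist_of_forall_openNhd ha hb hsX fun u hu => h u hu.1 hu.2)
end
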